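/- arXiv:1801.00584 — 5 statements merged into one kernel-verified Lean document; each statement's English description precedes it below -/
import Mathlib

section
/- In the stationary bipartite random walk, I(Z_1; Z_2) = I(X;Y) + H(U) where H(U) = log 2, the joint distribution of (Z_1, Z_2) restricted to the event Z_1 ∈ 𝒳 equals (1/2)·P_{X,Y}, and restricted to Z_1 ∈ 𝒴 equals (1/2)·P_{Y,X}. -/
open scoped BigOperators Classical

/-- First marginal of a joint distribution on a product of finite types. -/
noncomputable def margFst {α β : Type*} [Fintype β] (p : α × β → ℝ) (a : α) : ℝ :=
  ∑ b, p (a, b)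

/-- Second marginal of a joint distribution on a product of finite types. -/
noncomputable def margSnd {α β : Type*} [Fintype α] (p : α × β → ℝ) (b : β) : ℝ :=
  ∑ a, p (a, b)

/-- Mutual information of a joint distribution on a product of finite types. -/
noncomputable def mutualInfo {α β : Type*} [Fintype α] [Fintype β] (p : α × β → ℝ) : ℝ :=
  ∑ a, ∑ b, p (a, b) * Real.log (p (a, b) / (margFst p a * margSnd p b))

/-- Joint distribution of `(A, ζ(B))` when `(A, B) ~ p`. -/
noncomputable def pushRight {α β γ : Type*} [Fintype β] (ζ : β → γ) (p : α × β → ℝ) :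
    α × γ → ℝ :=
  fun ac => ∑ b, if ζ b = ac.2 then p (ac.1, b) else 0

/-- Joint distribution of `(φ(A), B)` when `(A, B) ~ p`. -/
noncomputable def pushLeft {α β γ : Type*} [Fintype α] (φ : α → γ) (p : α × β → ℝ) :
    γ × β → ℝ :=
  fun cb => ∑ a, if φ a = cb.1 then p (a, cb.2) else 0

/-- Joint distribution of `(φ(A), ψ(B))` when `(A, B) ~ p`. -/
noncomputable def pushBoth {α β γ δ : Type*} [Fintype α] [Fintype β] (φ : α → γ) (ψ : β → δ)
    (p : α × β → ℝ) : γ × δ → ℝ :=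
  fun cd => ∑ a, ∑ b, if φ a = cd.1 ∧ ψ b = cd.2 then p (a, b) else 0

/-- Shannon entropy of a distribution on a finite type. -/
noncomputable def entropy {α : Type*} [Fintype α] (q : α → ℝ) : ℝ :=
  -∑ a, q a * Real.log (q a)

/-- Transition matrix of the simple random walk on the bipartite graph with weight matrix `W`:
`A = D⁻¹ [[0, W], [Wᵀ, 0]]`. -/
noncomputable def bipA {X Y : Type*} [Fintype X] [Fintype Y] (W : X → Y → ℝ) :
    (X ⊕ Y) → (X ⊕ Y) → ℝ
  | Sum.inl x, Sum.inr y => W x y / ∑ y', W x y'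
  | Sum.inr y, Sum.inl x => W x y / ∑ x', W x' y
  | Sum.inl _, Sum.inl _ => 0
  | Sum.inr _, Sum.inr _ => 0

/-- The candidate invariant distribution: `μ(i) = P_X(i)/2` on `X` and `μ(j) = P_Y(j)/2` on `Y`,
where `P_{X,Y}` is `W` normalized to a probability distribution. -/
noncomputable def bipMu {X Y : Type*} [Fintype X] [Fintype Y] (W : X → Y → ℝ) : (X ⊕ Y) → ℝ
  | Sum.inl x => (∑ y, W x y) / (2 * ∑ x', ∑ y', W x' y')
  | Sum.inr y => (∑ x, W x y) / (2 * ∑ x', ∑ y', W x' y')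

/-- Adjacency relation of the bipartite graph induced by `W` (an edge where the weight is
positive). -/
def bipAdj {X Y : Type*} (W : X → Y → ℝ) : (X ⊕ Y) → (X ⊕ Y) → Prop
  | Sum.inl x, Sum.inr y => 0 < W x y
  | Sum.inr y, Sum.inl x => 0 < W x y
  | Sum.inl _, Sum.inl _ => False
  | Sum.inr _, Sum.inr _ => False

/-- Irreducibility (connectedness) of the bipartite graph induced by `W`. -/
def bipIrreducible {X Y : Type*} (W : X → Y → ℝ) : Prop :=
  ∀ s t : X ⊕ Y, Relation.ReflTransGen (bipAdj W) s t

/-- Joint distribution of two consecutive states `(Z₁, Z₂)` of the stationary random walk. -/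
noncomputable def bipJoint {X Y : Type*} [Fintype X] [Fintype Y] (W : X → Y → ℝ) :
    (X ⊕ Y) × (X ⊕ Y) → ℝ :=
  fun st => bipMu W st.1 * bipA W st.1 st.2

/-- The joint distribution `P_{X,Y}` obtained by normalizing `W`. -/
noncomputable def pXYof {X Y : Type*} [Fintype X] [Fintype Y] (W : X → Y → ℝ) : X × Y → ℝ :=
  fun xy => W xy.1 xy.2 / ∑ x, ∑ y, W x y


section bipAux
variable {X Y : Type*} [Fintype X] [Fintype Y]

lemma bip_row_pos (W : X → Y → ℝ) (hW : ∀ x y, 0 ≤ W x y) [Nonempty Y]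
    (hirr : bipIrreducible W) (x : X) : 0 < ∑ y, W x y := by
  obtain ⟨y0⟩ := ‹Nonempty Y›
  have h := hirr (Sum.inl x) (Sum.inr y0)
  rcases h.cases_head with h | ⟨c, hc, -⟩
  · exact absurd h (by simp)
  · cases c with
    | inl x' => exact absurd hc (by simp [bipAdj])
    | inr y => exact Finset.sum_pos' (fun y _ => hW x y) ⟨y, Finset.mem_univ y, hc⟩

lemma bip_col_pos (W : X → Y → ℝ) (hW : ∀ x y, 0 ≤ W x y) [Nonempty X]
    (hirr : bipIrreducible W) (y : Y) : 0 < ∑ x, W x y := by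
  obtain ⟨x0⟩ := ‹Nonempty X›
  have h := hirr (Sum.inr y) (Sum.inl x0)
  rcases h.cases_head with h | ⟨c, hc, -⟩
  · exact absurd h (by simp)
  · cases c with
    | inr y' => exact absurd hc (by simp [bipAdj])
    | inl x => exact Finset.sum_pos' (fun x _ => hW x y) ⟨x, Finset.mem_univ x, hc⟩

end bipAux

/-- in the stationary bipartite random walk, `I(Z₁;Z₂) = I(X;Y) + log 2`,
and the joint distribution of `(Z₁,Z₂)` equals `½·P_{X,Y}` on `𝒳 × 𝒴` and `½·P_{Y,X}`
on `𝒴 × 𝒳`. -/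
theorem bip_mutualInfo_decomposition
    {X Y : Type*} [Fintype X] [Fintype Y] [Nonempty X] [Nonempty Y]
    (W : X → Y → ℝ) (hW : ∀ x y, 0 ≤ W x y) (hpos : 0 < ∑ x, ∑ y, W x y)
    (hirr : bipIrreducible W) :
    mutualInfo (bipJoint W) = mutualInfo (pXYof W) + Real.log 2 ∧
      (∀ x y, bipJoint W (Sum.inl x, Sum.inr y) = pXYof W (x, y) / 2) ∧
      (∀ x y, bipJoint W (Sum.inr y, Sum.inl x) = pXYof W (x, y) / 2) := by
  classical
  set S := ∑ x, ∑ y, W x y with hSdef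
  have hSne : S ≠ 0 := ne_of_gt hpos
  have h2S : (2 * S) ≠ 0 := by positivity
  have hR : ∀ x, 0 < ∑ y, W x y := bip_row_pos W hW hirr
  have hC : ∀ y, 0 < ∑ x, W x y := bip_col_pos W hW hirr
  -- explicit joint values
  have hJ1 : ∀ x y, bipJoint W (Sum.inl x, Sum.inr y) = W x y / (2 * S) := by
    intro x y
    show (∑ y', W x y') / (2 * S) * (W x y / ∑ y', W x y') = W x y / (2 * S)
    field_simp
    rw [div_eq_iff (hR x).ne']
    ring
  have hJ2 : ∀ x y, bipJoint W (Sum.inr y, Sum.inl x) = W x y / (2 * S) := by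
    intro x y
    show (∑ x', W x' y) / (2 * S) * (W x y / ∑ x', W x' y) = W x y / (2 * S)
    field_simp
    rw [div_eq_iff (hC y).ne']
    ring
  have hz1 : ∀ x x', bipJoint W (Sum.inl x, Sum.inl x') = 0 := by
    intro x x'; show bipMu W (Sum.inl x) * bipA W (Sum.inl x) (Sum.inl x') = 0
    simp [bipA]
  have hz2 : ∀ y y', bipJoint W (Sum.inr y, Sum.inr y') = 0 := by
    intro y y'; show bipMu W (Sum.inr y) * bipA W (Sum.inr y) (Sum.inr y') = 0
    simp [bipA]
  -- marginals of bipJoint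
  have hmF1 : ∀ x, margFst (bipJoint W) (Sum.inl x) = (∑ y, W x y) / (2 * S) := by
    intro x
    unfold margFst
    rw [Fintype.sum_sum_type]
    simp only [hz1, Finset.sum_const_zero, zero_add]
    rw [Finset.sum_congr rfl fun y _ => hJ1 x y, ← Finset.sum_div]
  have hmF2 : ∀ y, margFst (bipJoint W) (Sum.inr y) = (∑ x, W x y) / (2 * S) := by
    intro y
    unfold margFst
    rw [Fintype.sum_sum_type]
    simp only [hz2, Finset.sum_const_zero, add_zero]
    rw [Finset.sum_congr rfl fun x _ => hJ2 x y, ← Finset.sum_div]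
  have hmS1 : ∀ x, margSnd (bipJoint W) (Sum.inl x) = (∑ y, W x y) / (2 * S) := by
    intro x
    unfold margSnd
    rw [Fintype.sum_sum_type]
    simp only [hz1, Finset.sum_const_zero, zero_add]
    rw [Finset.sum_congr rfl fun y _ => hJ2 x y, ← Finset.sum_div]
  have hmS2 : ∀ y, margSnd (bipJoint W) (Sum.inr y) = (∑ x, W x y) / (2 * S) := by
    intro y
    unfold margSnd
    rw [Fintype.sum_sum_type]
    simp only [hz2, Finset.sum_const_zero, add_zero]
    rw [Finset.sum_congr rfl fun x _ => hJ1 x y, ← Finset.sum_div]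
  -- marginals of pXYof
  have hmFp : ∀ x, margFst (pXYof W) x = (∑ y, W x y) / S := by
    intro x; unfold margFst pXYof; rw [← Finset.sum_div]
  have hmSp : ∀ y, margSnd (pXYof W) y = (∑ x, W x y) / S := by
    intro y; unfold margSnd pXYof; rw [← Finset.sum_div]
  -- abbreviation for the summand of the bipartite mutual information
  set A : X → Y → ℝ := fun x y => (W x y / (2 * S)) *
      Real.log ((W x y / (2 * S)) /
        ((∑ y', W x y') / (2 * S) * ((∑ x', W x' y) / (2 * S)))) with hAdef
  have e1 : ∀ x y, bipJoint W (Sum.inl x, Sum.inr y) *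
      Real.log (bipJoint W (Sum.inl x, Sum.inr y) /
        (margFst (bipJoint W) (Sum.inl x) * margSnd (bipJoint W) (Sum.inr y))) = A x y := by
    intro x y; rw [hJ1, hmF1, hmS2]
  have e2 : ∀ x y, bipJoint W (Sum.inr y, Sum.inl x) *
      Real.log (bipJoint W (Sum.inr y, Sum.inl x) /
        (margFst (bipJoint W) (Sum.inr y) * margSnd (bipJoint W) (Sum.inl x))) = A x y := by
    intro x y; rw [hJ2, hmF2, hmS1, hAdef]
    ring_nf
  have hMI : mutualInfo (bipJoint W) = (∑ x, ∑ y, A x y) + (∑ y, ∑ x, A x y) := by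
    unfold mutualInfo
    rw [Fintype.sum_sum_type]
    congr 1
    · refine Finset.sum_congr rfl fun x _ => ?_
      rw [Fintype.sum_sum_type]
      simp only [hz1, zero_mul, Finset.sum_const_zero, zero_add]
      exact Finset.sum_congr rfl fun y _ => e1 x y
    · refine Finset.sum_congr rfl fun y _ => ?_
      rw [Fintype.sum_sum_type]
      simp only [hz2, zero_mul, Finset.sum_const_zero, add_zero]
      exact Finset.sum_congr rfl fun x _ => e2 x y
  -- the mutual information of pXYof
  set B : X → Y → ℝ := fun x y => (W x y / S) *
      Real.log ((W x y / S) / ((∑ y', W x y') / S * ((∑ x', W x' y) / S))) with hBdef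
  have hMIp : mutualInfo (pXYof W) = ∑ x, ∑ y, B x y := by
    unfold mutualInfo
    refine Finset.sum_congr rfl fun x _ => Finset.sum_congr rfl fun y _ => ?_
    rw [hmFp x, hmSp y]
    rfl
  -- pointwise identity
  have key : ∀ x y, A x y = (1 / 2) * B x y + (W x y / (2 * S)) * Real.log 2 := by
    intro x y
    rcases eq_or_lt_of_le (hW x y) with h0 | h0
    · simp [hAdef, hBdef, ← h0]
    · have hr : 0 < (W x y / S) / ((∑ y', W x y') / S * ((∑ x', W x' y) / S)) := by
        apply div_pos (div_pos h0 hpos)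
        exact mul_pos (div_pos (hR x) hpos) (div_pos (hC y) hpos)
      have harg : (W x y / (2 * S)) /
          ((∑ y', W x y') / (2 * S) * ((∑ x', W x' y) / (2 * S))) =
          2 * ((W x y / S) / ((∑ y', W x y') / S * ((∑ x', W x' y) / S))) := by
        field_simp
      rw [hAdef, hBdef]
      simp only
      rw [harg, Real.log_mul two_ne_zero hr.ne']
      field_simp
      ring
  -- total mass of W/(2S)
  have hmass : ∑ x, ∑ y, W x y / (2 * S) = 1 / 2 := by
    have : ∀ x, ∑ y, W x y / (2 * S) = (∑ y, W x y) / (2 * S) := fun x =>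
      (Finset.sum_div _ _ _).symm
    rw [Finset.sum_congr rfl fun x _ => this x, ← Finset.sum_div, ← hSdef]
    rw [div_eq_div_iff h2S two_ne_zero]
    ring
  have hsumA : ∑ x, ∑ y, A x y = (1 / 2) * mutualInfo (pXYof W) + (1 / 2) * Real.log 2 := by
    rw [hMIp]
    calc ∑ x, ∑ y, A x y
        = ∑ x, ∑ y, ((1 / 2) * B x y + (W x y / (2 * S)) * Real.log 2) :=
          Finset.sum_congr rfl fun x _ => Finset.sum_congr rfl fun y _ => key x y
      _ = (1 / 2) * (∑ x, ∑ y, B x y) + (∑ x, ∑ y, W x y / (2 * S)) * Real.log 2 := by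
          simp only [Finset.sum_add_distrib, Finset.mul_sum, Finset.sum_mul]
      _ = (1 / 2) * (∑ x, ∑ y, B x y) + (1 / 2) * Real.log 2 := by rw [hmass]
  refine ⟨?_, fun x y => ?_, fun x y => ?_⟩
  · rw [hMI, show (∑ y, ∑ x, A x y) = ∑ x, ∑ y, A x y from Finset.sum_comm, hsumA]
    ring
  · rw [hJ1]
    show W x y / (2 * S) = W x y / S / 2
    rw [div_div]
    ring_nf
  · rw [hJ2]
    show W x y / (2 * S) = W x y / S / 2
    rw [div_div]
    ring_nf
end

section
/- Proposition (cost function identity for co-clustering): for the stationary bipartite random walk and any ζ satisfying the mutual exclusivity constraint (ζ = Φ on 𝒳 and ζ = Ψ on 𝒴 with disjoint cluster alphabets), 2·L_β(ζ) = β(L_X(Y→Ȳ) + L_Y(X→X̄)) + (1−β)(L_{X̄}(Y→Ȳ) + L_{Ȳ}(X→X̄)), where L_β(ζ) = β·L_{Z_1}(Z_2→Z̄_2) + (1−β)·L_{Z̄_2}(Z_1→Z̄_1), X̄ = Φ(X), Ȳ = Ψ(Y). -/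
open scoped BigOperators Classical

/-! ### Auxiliary machinery: the "cross" distribution -/

/-- Symmetrized cross distribution on `(A ⊕ B) × (C ⊕ D)` built from
`u : A × D → ℝ` and `v : C × B → ℝ`. -/
noncomputable def crossDist {A B C D : Type*} (u : A × D → ℝ) (v : C × B → ℝ) :
    (A ⊕ B) × (C ⊕ D) → ℝ
  | (Sum.inl a, Sum.inr d) => u (a, d) / 2
  | (Sum.inr b, Sum.inl c) => v (c, b) / 2
  | (Sum.inl _, Sum.inl _) => 0
  | (Sum.inr _, Sum.inr _) => 0

lemma margFst_cross_inl {A B C D : Type*} [Fintype C] [Fintype D]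
    (u : A × D → ℝ) (v : C × B → ℝ) (a : A) :
    margFst (crossDist u v) (Sum.inl a) = margFst u a / 2 := by
  simp [margFst, Fintype.sum_sum_type, crossDist, Finset.sum_div]

lemma margFst_cross_inr {A B C D : Type*} [Fintype C] [Fintype D]
    (u : A × D → ℝ) (v : C × B → ℝ) (b : B) :
    margFst (crossDist u v) (Sum.inr b) = margSnd v b / 2 := by
  simp [margFst, margSnd, Fintype.sum_sum_type, crossDist, Finset.sum_div]

lemma margSnd_cross_inl {A B C D : Type*} [Fintype A] [Fintype B]
    (u : A × D → ℝ) (v : C × B → ℝ) (c : C) :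
    margSnd (crossDist u v) (Sum.inl c) = margFst v c / 2 := by
  simp [margFst, margSnd, Fintype.sum_sum_type, crossDist, Finset.sum_div]

lemma margSnd_cross_inr {A B C D : Type*} [Fintype A] [Fintype B]
    (u : A × D → ℝ) (v : C × B → ℝ) (d : D) :
    margSnd (crossDist u v) (Sum.inr d) = margSnd u d / 2 := by
  simp [margSnd, Fintype.sum_sum_type, crossDist, Finset.sum_div]

lemma term_half (a m1 m2 : ℝ) (ha : 0 ≤ a) (h1 : a ≤ m1) (h2 : a ≤ m2) :
    a / 2 * Real.log (a / 2 / (m1 / 2 * (m2 / 2))) =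
      (a * Real.log (a / (m1 * m2)) + a * Real.log 2) / 2 := by
  rcases eq_or_lt_of_le ha with h | h
  · simp [← h]
  · have hm1 : 0 < m1 := lt_of_lt_of_le h h1
    have hm2 : 0 < m2 := lt_of_lt_of_le h h2
    have hrw : a / 2 / (m1 / 2 * (m2 / 2)) = a / (m1 * m2) * 2 := by
      field_simp
    rw [hrw, Real.log_mul (by positivity) (by norm_num)]
    ring

lemma le_margFst {A D : Type*} [Fintype D] (u : A × D → ℝ) (hu : ∀ z, 0 ≤ u z)
    (a : A) (d : D) : u (a, d) ≤ margFst u a :=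
  Finset.single_le_sum (f := fun d => u (a, d)) (fun _ _ => hu _) (Finset.mem_univ d)

lemma le_margSnd {A D : Type*} [Fintype A] (u : A × D → ℝ) (hu : ∀ z, 0 ≤ u z)
    (a : A) (d : D) : u (a, d) ≤ margSnd u d :=
  Finset.single_le_sum (f := fun a => u (a, d)) (fun _ _ => hu _) (Finset.mem_univ a)

lemma sum_half {α γ : Type*} [Fintype α] [Fintype γ] (f g : α → γ → ℝ) :
    ∑ a, ∑ d, (f a d + g a d) / 2 = ((∑ a, ∑ d, f a d) + (∑ a, ∑ d, g a d)) / 2 := by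
  simp [add_div, Finset.sum_add_distrib, Finset.sum_div]

lemma mutualInfo_cross {A B C D : Type*} [Fintype A] [Fintype B] [Fintype C] [Fintype D]
    (u : A × D → ℝ) (v : C × B → ℝ)
    (hu : ∀ z, 0 ≤ u z) (hv : ∀ z, 0 ≤ v z)
    (hsu : ∑ z, u z = 1) (hsv : ∑ z, v z = 1) :
    mutualInfo (crossDist u v) = (mutualInfo u + mutualInfo v) / 2 + Real.log 2 := by
  have hsu' : ∑ a, ∑ d, u (a, d) = 1 := by rw [← Fintype.sum_prod_type]; exact hsu
  have hsv' : ∑ c, ∑ b, v (c, b) = 1 := by rw [← Fintype.sum_prod_type]; exact hsv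
  show (∑ s : A ⊕ B, ∑ t : C ⊕ D, crossDist u v (s, t) *
      Real.log (crossDist u v (s, t) /
        (margFst (crossDist u v) s * margSnd (crossDist u v) t))) = _
  rw [Fintype.sum_sum_type]
  have h1 : ∀ a : A,
      (∑ t : C ⊕ D, crossDist u v (Sum.inl a, t) *
        Real.log (crossDist u v (Sum.inl a, t) /
          (margFst (crossDist u v) (Sum.inl a) * margSnd (crossDist u v) t)))
      = ∑ d, (u (a, d) * Real.log (u (a, d) / (margFst u a * margSnd u d))
              + u (a, d) * Real.log 2) / 2 := by
    intro a
    rw [Fintype.sum_sum_type]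
    have hz : (∑ c : C, crossDist u v (Sum.inl a, Sum.inl c) *
        Real.log (crossDist u v (Sum.inl a, Sum.inl c) /
          (margFst (crossDist u v) (Sum.inl a) * margSnd (crossDist u v) (Sum.inl c)))) = 0 := by
      apply Finset.sum_eq_zero; intro c _; simp [crossDist]
    rw [hz, zero_add]
    refine Finset.sum_congr rfl (fun d _ => ?_)
    show u (a, d) / 2 * Real.log (u (a, d) / 2 /
        (margFst (crossDist u v) (Sum.inl a) * margSnd (crossDist u v) (Sum.inr d))) = _
    rw [margFst_cross_inl, margSnd_cross_inr]
    exact term_half _ _ _ (hu _) (le_margFst u hu a d) (le_margSnd u hu a d)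
  have h2 : ∀ b : B,
      (∑ t : C ⊕ D, crossDist u v (Sum.inr b, t) *
        Real.log (crossDist u v (Sum.inr b, t) /
          (margFst (crossDist u v) (Sum.inr b) * margSnd (crossDist u v) t)))
      = ∑ c, (v (c, b) * Real.log (v (c, b) / (margFst v c * margSnd v b))
              + v (c, b) * Real.log 2) / 2 := by
    intro b
    rw [Fintype.sum_sum_type]
    have hz : (∑ d : D, crossDist u v (Sum.inr b, Sum.inr d) *
        Real.log (crossDist u v (Sum.inr b, Sum.inr d) /
          (margFst (crossDist u v) (Sum.inr b) * margSnd (crossDist u v) (Sum.inr d)))) = 0 := by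
      apply Finset.sum_eq_zero; intro d _; simp [crossDist]
    rw [hz, add_zero]
    refine Finset.sum_congr rfl (fun c _ => ?_)
    show v (c, b) / 2 * Real.log (v (c, b) / 2 /
        (margFst (crossDist u v) (Sum.inr b) * margSnd (crossDist u v) (Sum.inl c))) = _
    rw [margFst_cross_inr, margSnd_cross_inl, mul_comm (margSnd v b / 2)]
    exact term_half _ _ _ (hv _) (le_margFst v hv c b) (le_margSnd v hv c b)
  rw [Finset.sum_congr rfl (fun a _ => h1 a), Finset.sum_congr rfl (fun b _ => h2 b)]
  have e1 : (∑ a, ∑ d, (u (a, d) * Real.log (u (a, d) / (margFst u a * margSnd u d))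
      + u (a, d) * Real.log 2) / 2) = (mutualInfo u + Real.log 2) / 2 := by
    rw [sum_half]
    have hlog : (∑ a, ∑ d, u (a, d) * Real.log 2) = Real.log 2 := by
      simp only [← Finset.sum_mul]; rw [hsu', one_mul]
    rw [hlog]; rfl
  have e2 : (∑ b, ∑ c, (v (c, b) * Real.log (v (c, b) / (margFst v c * margSnd v b))
      + v (c, b) * Real.log 2) / 2) = (mutualInfo v + Real.log 2) / 2 := by
    rw [Finset.sum_comm, sum_half]
    have hlog : (∑ c, ∑ b, v (c, b) * Real.log 2) = Real.log 2 := by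
      simp only [← Finset.sum_mul]; rw [hsv', one_mul]
    rw [hlog]; rfl
  rw [e1, e2]; ring

/-! ### Nonnegativity and normalization of the pushed distributions -/

lemma pXYof_nonneg {X Y : Type*} [Fintype X] [Fintype Y] (W : X → Y → ℝ)
    (hW : ∀ x y, 0 ≤ W x y) (hpos : 0 < ∑ x, ∑ y, W x y) :
    ∀ z, 0 ≤ pXYof W z := fun z => div_nonneg (hW _ _) hpos.le

lemma sum_pXYof {X Y : Type*} [Fintype X] [Fintype Y] (W : X → Y → ℝ)
    (hpos : 0 < ∑ x, ∑ y, W x y) : ∑ z, pXYof W z = 1 := by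
  rw [Fintype.sum_prod_type]
  simp only [pXYof, ← Finset.sum_div]
  exact div_self hpos.ne'

lemma pushRight_nonneg {α β γ : Type*} [Fintype β] (ζ : β → γ) (p : α × β → ℝ)
    (hp : ∀ z, 0 ≤ p z) : ∀ z, 0 ≤ pushRight ζ p z := by
  intro z
  apply Finset.sum_nonneg
  intro b _
  split
  · exact hp _
  · exact le_rfl

lemma pushLeft_nonneg {α β γ : Type*} [Fintype α] (φ : α → γ) (p : α × β → ℝ)
    (hp : ∀ z, 0 ≤ p z) : ∀ z, 0 ≤ pushLeft φ p z := by
  intro z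
  apply Finset.sum_nonneg
  intro a _
  split
  · exact hp _
  · exact le_rfl

lemma pushBoth_nonneg {α β γ δ : Type*} [Fintype α] [Fintype β] (φ : α → γ) (ψ : β → δ)
    (p : α × β → ℝ) (hp : ∀ z, 0 ≤ p z) : ∀ z, 0 ≤ pushBoth φ ψ p z := by
  intro z
  apply Finset.sum_nonneg
  intro a _
  apply Finset.sum_nonneg
  intro b _
  split
  · exact hp _
  · exact le_rfl

lemma sum_pushRight {α β γ : Type*} [Fintype α] [Fintype β] [Fintype γ]
    (ζ : β → γ) (p : α × β → ℝ) :
    ∑ z, pushRight ζ p z = ∑ z, p z := by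
  rw [Fintype.sum_prod_type, Fintype.sum_prod_type]
  refine Finset.sum_congr rfl (fun a _ => ?_)
  simp only [pushRight]
  rw [Finset.sum_comm]
  refine Finset.sum_congr rfl (fun b _ => ?_)
  simp

lemma sum_pushLeft {α β γ : Type*} [Fintype α] [Fintype β] [Fintype γ]
    (φ : α → γ) (p : α × β → ℝ) :
    ∑ z, pushLeft φ p z = ∑ z, p z := by
  rw [Fintype.sum_prod_type, Fintype.sum_prod_type]
  calc (∑ c : γ, ∑ b, pushLeft φ p (c, b))
      = ∑ b : β, ∑ c : γ, ∑ a : α, (if φ a = c then p (a, b) else 0) := Finset.sum_comm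
    _ = ∑ b : β, ∑ a : α, ∑ c : γ, (if φ a = c then p (a, b) else 0) :=
        Finset.sum_congr rfl fun b _ => Finset.sum_comm
    _ = ∑ b : β, ∑ a : α, p (a, b) := by simp
    _ = ∑ a : α, ∑ b : β, p (a, b) := Finset.sum_comm
lemma sum_pushBoth {α β γ δ : Type*} [Fintype α] [Fintype β] [Fintype γ] [Fintype δ]
    (φ : α → γ) (ψ : β → δ) (p : α × β → ℝ) :
    ∑ z, pushBoth φ ψ p z = ∑ z, p z := by
  rw [Fintype.sum_prod_type, Fintype.sum_prod_type]
  calc (∑ c : γ, ∑ d : δ, pushBoth φ ψ p (c, d))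
      = ∑ c : γ, ∑ d : δ, ∑ a : α, ∑ b : β, (if φ a = c ∧ ψ b = d then p (a, b) else 0) := rfl
    _ = ∑ c : γ, ∑ a : α, ∑ d : δ, ∑ b : β, (if φ a = c ∧ ψ b = d then p (a, b) else 0) :=
        Finset.sum_congr rfl fun c _ => Finset.sum_comm
    _ = ∑ a : α, ∑ c : γ, ∑ d : δ, ∑ b : β, (if φ a = c ∧ ψ b = d then p (a, b) else 0) :=
        Finset.sum_comm
    _ = ∑ a : α, ∑ c : γ, ∑ b : β, ∑ d : δ, (if φ a = c ∧ ψ b = d then p (a, b) else 0) :=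
        Finset.sum_congr rfl fun a _ => Finset.sum_congr rfl fun c _ => Finset.sum_comm
    _ = ∑ a : α, ∑ b : β, ∑ c : γ, ∑ d : δ, (if φ a = c ∧ ψ b = d then p (a, b) else 0) :=
        Finset.sum_congr rfl fun a _ => Finset.sum_comm
    _ = ∑ a : α, ∑ b : β, p (a, b) := by simp [ite_and]
/-! ### Identifying the bipartite distributions as cross distributions -/

lemma bipJoint_eq_cross {X Y : Type*} [Fintype X] [Fintype Y] (W : X → Y → ℝ)
    (hW : ∀ x y, 0 ≤ W x y) :
    bipJoint W = crossDist (pXYof W) (pXYof W) := by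
  funext st
  obtain ⟨s, t⟩ := st
  rcases s with x | y <;> rcases t with x' | y'
  · simp [bipJoint, bipA, crossDist]
  · show (∑ y, W x y) / (2 * ∑ x', ∑ y', W x' y') * (W x y' / ∑ y'', W x y'')
        = (W x y' / ∑ x', ∑ y', W x' y') / 2
    rcases eq_or_ne (∑ y, W x y) 0 with h | h
    · have hz : W x y' = 0 :=
        (Finset.sum_eq_zero_iff_of_nonneg (fun y _ => hW x y)).mp h y' (Finset.mem_univ y')
      simp [h, hz]
    · rcases eq_or_ne (∑ x', ∑ y', W x' y') 0 with hS | hS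
      · simp [hS]
      · field_simp
  · show (∑ x, W x y) / (2 * ∑ x', ∑ y', W x' y') * (W x' y / ∑ x'', W x'' y)
        = (W x' y / ∑ x'', ∑ y', W x'' y') / 2
    rcases eq_or_ne (∑ x, W x y) 0 with h | h
    · have hz : W x' y = 0 :=
        (Finset.sum_eq_zero_iff_of_nonneg (fun x _ => hW x y)).mp h x' (Finset.mem_univ x')
      simp [h, hz]
    · rcases eq_or_ne (∑ x', ∑ y', W x' y') 0 with hS | hS
      · simp [hS]
      · field_simp
  · simp [bipJoint, bipA, crossDist]

lemma sum_ite_div {ι : Type*} [Fintype ι] (P : ι → Prop) [DecidablePred P] (f : ι → ℝ) :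
    (∑ i, if P i then f i / 2 else 0) = (∑ i, if P i then f i else 0) / 2 := by
  rw [Finset.sum_div]
  refine Finset.sum_congr rfl (fun i _ => ?_)
  split <;> simp

lemma pushRight_cross {A B C D C' D' : Type*} [Fintype A] [Fintype B] [Fintype C] [Fintype D]
    (Φ : C → C') (Ψ : D → D') (u : A × D → ℝ) (v : C × B → ℝ) :
    pushRight (Sum.map Φ Ψ) (crossDist u v)
      = crossDist (pushRight Ψ u) (pushLeft Φ v) := by
  funext st
  obtain ⟨s, t⟩ := st
  rcases s with a | b <;> rcases t with c' | d' <;>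
    simp only [pushRight, pushLeft, crossDist, Fintype.sum_sum_type, Sum.map_inl, Sum.map_inr]
  case inl.inl => simp
  case inl.inr => simp [Finset.sum_div, ite_div]
  case inr.inl => simp [Finset.sum_div, ite_div]
  case inr.inr => simp
lemma pushBoth_cross {X Y Xb Yb : Type*} [Fintype X] [Fintype Y]
    (Φ : X → Xb) (Ψ : Y → Yb) (u v : X × Y → ℝ) :
    pushBoth (Sum.map Φ Ψ) (Sum.map Φ Ψ) (crossDist u v)
      = crossDist (pushBoth Φ Ψ u) (pushBoth Φ Ψ v) := by
  funext st
  obtain ⟨s, t⟩ := st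
  rcases s with xb | yb <;> rcases t with xb' | yb' <;>
    simp only [pushBoth, crossDist, Fintype.sum_sum_type, Sum.map_inl, Sum.map_inr]
  case inl.inl => simp
  case inl.inr => simp [Finset.sum_div, ite_div]
  case inr.inl =>
    simp only [Finset.sum_div]
    rw [Finset.sum_comm]
    simp [ite_div, and_comm]
  case inr.inr => simp
/-- Proposition: for the stationary bipartite random walk and the combined
clustering map `ζ = Sum.map Φ Ψ` (mutual exclusivity), `2·L_β(ζ)` equals
`β(L_X(Y→Ȳ) + L_Y(X→X̄)) + (1−β)(L_{X̄}(Y→Ȳ) + L_{Ȳ}(X→X̄))`. -/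
theorem bip_cost_function_identity
    {X Y Xb Yb : Type*} [Fintype X] [Fintype Y] [Fintype Xb] [Fintype Yb]
    [Nonempty X] [Nonempty Y]
    (W : X → Y → ℝ) (hW : ∀ x y, 0 ≤ W x y) (hpos : 0 < ∑ x, ∑ y, W x y)
    (hirr : bipIrreducible W)
    (Φ : X → Xb) (Ψ : Y → Yb) (β : ℝ) (hβ : β ∈ Set.Icc (0 : ℝ) 1) :
    2 * (β * (mutualInfo (bipJoint W)
              - mutualInfo (pushRight (Sum.map Φ Ψ) (bipJoint W)))
        + (1 - β) * (mutualInfo (pushRight (Sum.map Φ Ψ) (bipJoint W))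
              - mutualInfo (pushBoth (Sum.map Φ Ψ) (Sum.map Φ Ψ) (bipJoint W))))
      = β * ((mutualInfo (pXYof W) - mutualInfo (pushRight Ψ (pXYof W)))
            + (mutualInfo (pXYof W) - mutualInfo (pushLeft Φ (pXYof W))))
        + (1 - β) * ((mutualInfo (pushLeft Φ (pXYof W))
              - mutualInfo (pushBoth Φ Ψ (pXYof W)))
            + (mutualInfo (pushRight Ψ (pXYof W))
              - mutualInfo (pushBoth Φ Ψ (pXYof W)))) := by
  have hp0 : ∀ z, 0 ≤ pXYof W z := pXYof_nonneg W hW hpos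
  have hps : ∑ z, pXYof W z = 1 := sum_pXYof W hpos
  have h1 : bipJoint W = crossDist (pXYof W) (pXYof W) := bipJoint_eq_cross W hW
  have h2 : pushRight (Sum.map Φ Ψ) (bipJoint W)
      = crossDist (pushRight Ψ (pXYof W)) (pushLeft Φ (pXYof W)) := by
    rw [h1, pushRight_cross]
  have h3 : pushBoth (Sum.map Φ Ψ) (Sum.map Φ Ψ) (bipJoint W)
      = crossDist (pushBoth Φ Ψ (pXYof W)) (pushBoth Φ Ψ (pXYof W)) := by
    rw [h1, pushBoth_cross]
  rw [h2, h3, h1,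
    mutualInfo_cross _ _ hp0 hp0 hps hps,
    mutualInfo_cross _ _ (pushRight_nonneg Ψ _ hp0) (pushLeft_nonneg Φ _ hp0)
      ((sum_pushRight Ψ _).trans hps) ((sum_pushLeft Φ _).trans hps),
    mutualInfo_cross _ _ (pushBoth_nonneg Φ Ψ _ hp0) (pushBoth_nonneg Φ Ψ _ hp0)
      ((sum_pushBoth Φ Ψ _).trans hps) ((sum_pushBoth Φ Ψ _).trans hps)]
  ring
end

section
/- With Z̄_1 = ζ(Z_1) for ζ respecting the bipartition (ζ|_𝒳 = Φ, ζ|_𝒴 = Ψ), the mutual information I(Z̄_1; Z_2) in the stationary bipartite random walk equals (1/2)·I(X̄;Y) + (1/2)·I(X;Ȳ) + H(U), where H(U) = log 2 and U = 1{Z_1 ∈ 𝒳}. -/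
open scoped BigOperators Classical

lemma aux_half_mi {α β : Type*} [Fintype α] [Fintype β] (r : α × β → ℝ)
    (hr : ∀ ab, 0 ≤ r ab) (hsum : ∑ a, ∑ b, r (a, b) = 1) :
    ∑ a, ∑ b, (r (a, b) / 2) *
        Real.log ((r (a, b) / 2) / ((margFst r a / 2) * (margSnd r b / 2)))
      = (1 / 2) * mutualInfo r + (1 / 2) * Real.log 2 := by
  have key : ∀ a b, (r (a, b) / 2) *
        Real.log ((r (a, b) / 2) / ((margFst r a / 2) * (margSnd r b / 2)))
      = (1 / 2) * (r (a, b) * Real.log (r (a, b) / (margFst r a * margSnd r b)))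
        + (1 / 2) * (r (a, b) * Real.log 2) := by
    intro a b
    rcases eq_or_lt_of_le (hr (a, b)) with h0 | hpos
    · rw [← h0]; simp
    · have hMa : 0 < margFst r a := by
        have : r (a, b) ≤ margFst r a :=
          Finset.single_le_sum (fun b' _ => hr (a, b')) (Finset.mem_univ b)
        linarith
      have hMb : 0 < margSnd r b := by
        have : r (a, b) ≤ margSnd r b :=
          Finset.single_le_sum (fun a' _ => hr (a', b)) (Finset.mem_univ a)
        linarith
      have harg : (r (a, b) / 2) / ((margFst r a / 2) * (margSnd r b / 2))
          = 2 * (r (a, b) / (margFst r a * margSnd r b)) := by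
        field_simp
      rw [harg, Real.log_mul (by norm_num)
        (ne_of_gt (div_pos hpos (mul_pos hMa hMb)))]
      ring
  calc ∑ a, ∑ b, (r (a, b) / 2) *
        Real.log ((r (a, b) / 2) / ((margFst r a / 2) * (margSnd r b / 2)))
      = ∑ a, ∑ b, ((1 / 2) * (r (a, b) * Real.log (r (a, b) / (margFst r a * margSnd r b)))
        + (1 / 2) * (r (a, b) * Real.log 2)) := by
        refine Finset.sum_congr rfl fun a _ => Finset.sum_congr rfl fun b _ => key a b
    _ = (1 / 2) * mutualInfo r + (1 / 2) * ((∑ a, ∑ b, r (a, b)) * Real.log 2) := by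
        simp only [Finset.sum_add_distrib, ← Finset.mul_sum, mutualInfo, Finset.sum_mul]
    _ = (1 / 2) * mutualInfo r + (1 / 2) * Real.log 2 := by rw [hsum, one_mul]

/-- `I(Z̄₁; Z₂) = ½·I(X̄;Y) + ½·I(X;Ȳ) + log 2` in the stationary bipartite
random walk, where `Z̄₁ = ζ(Z₁)` and `ζ = Sum.map Φ Ψ` respects the bipartition. -/
theorem bip_clustered_first_mutualInfo
    {X Y Xb Yb : Type*} [Fintype X] [Fintype Y] [Fintype Xb] [Fintype Yb]
    [Nonempty X] [Nonempty Y]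
    (W : X → Y → ℝ) (hW : ∀ x y, 0 ≤ W x y) (hpos : 0 < ∑ x, ∑ y, W x y)
    (hirr : bipIrreducible W) (Φ : X → Xb) (Ψ : Y → Yb) :
    mutualInfo (pushLeft (Sum.map Φ Ψ) (bipJoint W))
      = (1 / 2) * mutualInfo (pushLeft Φ (pXYof W))
        + (1 / 2) * mutualInfo (pushRight Ψ (pXYof W)) + Real.log 2 := by
  classical
  set S : ℝ := ∑ x, ∑ y, W x y with hSdef
  have hS : S ≠ 0 := ne_of_gt hpos
  set p : X × Y → ℝ := pXYof W with hpdef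
  have hpnn : ∀ xy : X × Y, 0 ≤ p xy := fun xy => div_nonneg (hW _ _) (le_of_lt hpos)
  have hpsum : ∑ x, ∑ y, p (x, y) = 1 := by
    simp only [hpdef, pXYof, ← Finset.sum_div, ← hSdef]
    exact div_self hS
  -- values of the joint chain distribution
  have hJ1 : ∀ x y, bipJoint W (Sum.inl x, Sum.inr y) = p (x, y) / 2 := by
    intro x y
    show bipMu W (Sum.inl x) * bipA W (Sum.inl x) (Sum.inr y) = p (x, y) / 2
    simp only [bipMu, bipA, hpdef, pXYof, ← hSdef]
    by_cases hR : ∑ y', W x y' = 0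
    · have h0 : W x y = 0 := by
        have := (Finset.sum_eq_zero_iff_of_nonneg (fun y' _ => hW x y')).mp hR
        exact this y (Finset.mem_univ y)
      simp [hR, h0]
    · field_simp
  have hJ2 : ∀ x y, bipJoint W (Sum.inr y, Sum.inl x) = p (x, y) / 2 := by
    intro x y
    show bipMu W (Sum.inr y) * bipA W (Sum.inr y) (Sum.inl x) = p (x, y) / 2
    simp only [bipMu, bipA, hpdef, pXYof, ← hSdef]
    by_cases hC : ∑ x', W x' y = 0
    · have h0 : W x y = 0 := by
        have := (Finset.sum_eq_zero_iff_of_nonneg (fun x' _ => hW x' y)).mp hC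
        exact this x (Finset.mem_univ x)
      simp [hC, h0]
    · field_simp
  have hJll : ∀ x x', bipJoint W (Sum.inl x, Sum.inl x') = 0 := by
    intro x x'
    show bipMu W (Sum.inl x) * bipA W (Sum.inl x) (Sum.inl x') = 0
    simp [bipA]
  have hJrr : ∀ y y', bipJoint W (Sum.inr y, Sum.inr y') = 0 := by
    intro y y'
    show bipMu W (Sum.inr y) * bipA W (Sum.inr y) (Sum.inr y') = 0
    simp [bipA]
  set A1 : Xb × Y → ℝ := pushLeft Φ p with hA1def
  set A2 : X × Yb → ℝ := pushRight Ψ p with hA2def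
  set q : (Xb ⊕ Yb) × (X ⊕ Y) → ℝ := pushLeft (Sum.map Φ Ψ) (bipJoint W) with hqdef
  -- values of q
  have hq1 : ∀ c y, q (Sum.inl c, Sum.inr y) = A1 (c, y) / 2 := by
    intro c y
    rw [hqdef]
    simp only [pushLeft]
    rw [Fintype.sum_sum_type]
    simp only [Sum.map_inl, Sum.map_inr, Sum.inl.injEq, reduceCtorEq, if_false,
      Finset.sum_const_zero, add_zero]
    rw [hA1def]
    simp only [pushLeft]
    rw [Finset.sum_div]
    refine Finset.sum_congr rfl fun x _ => ?_
    rw [hJ1 x y]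
    split <;> simp
  have hq2 : ∀ d x, q (Sum.inr d, Sum.inl x) = A2 (x, d) / 2 := by
    intro d x
    rw [hqdef]
    simp only [pushLeft]
    rw [Fintype.sum_sum_type]
    simp only [Sum.map_inl, Sum.map_inr, Sum.inr.injEq, reduceCtorEq, if_false,
      Finset.sum_const_zero, zero_add]
    rw [hA2def]
    simp only [pushRight]
    rw [Finset.sum_div]
    refine Finset.sum_congr rfl fun y _ => ?_
    rw [hJ2 x y]
    split <;> simp
  have hq3 : ∀ c x, q (Sum.inl c, Sum.inl x) = 0 := by
    intro c x
    rw [hqdef]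
    simp only [pushLeft]
    rw [Fintype.sum_sum_type]
    simp [hJll]
  have hq4 : ∀ d y, q (Sum.inr d, Sum.inr y) = 0 := by
    intro d y
    rw [hqdef]
    simp only [pushLeft]
    rw [Fintype.sum_sum_type]
    simp [hJrr]
  -- nonnegativity and normalization of A1, A2
  have hA1nn : ∀ cy : Xb × Y, 0 ≤ A1 cy := by
    intro cy
    rw [hA1def]
    refine Finset.sum_nonneg fun x _ => ?_
    split
    · exact hpnn _
    · exact le_rfl
  have hA2nn : ∀ xd : X × Yb, 0 ≤ A2 xd := by
    intro xd
    rw [hA2def]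
    refine Finset.sum_nonneg fun y _ => ?_
    split
    · exact hpnn _
    · exact le_rfl
  have hA1sum : ∑ c, ∑ y, A1 (c, y) = 1 := by
    have h : ∑ c, ∑ y, A1 (c, y) = ∑ y, ∑ x, p (x, y) := by
      rw [Finset.sum_comm]
      refine Finset.sum_congr rfl fun y _ => ?_
      simp only [hA1def, pushLeft]
      rw [Finset.sum_comm]
      refine Finset.sum_congr rfl fun x _ => ?_
      simp
    rw [h, Finset.sum_comm, hpsum]
  have hA2sum : ∑ d, ∑ x, A2 (x, d) = 1 := by
    have h : ∑ d, ∑ x, A2 (x, d) = ∑ x, ∑ y, p (x, y) := by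
      rw [Finset.sum_comm]
      refine Finset.sum_congr rfl fun x _ => ?_
      simp only [hA2def, pushRight]
      rw [Finset.sum_comm]
      refine Finset.sum_congr rfl fun y _ => ?_
      simp
    rw [h, hpsum]
  -- marginals of q
  have hmF1 : ∀ c, margFst q (Sum.inl c) = margFst A1 c / 2 := by
    intro c
    rw [margFst, Fintype.sum_sum_type]
    simp only [hq3, hq1, Finset.sum_const_zero, zero_add]
    rw [margFst, Finset.sum_div]
  have hmF2 : ∀ d, margFst q (Sum.inr d) = margSnd A2 d / 2 := by
    intro d
    rw [margFst, Fintype.sum_sum_type]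
    simp only [hq2, hq4, Finset.sum_const_zero, add_zero]
    rw [margSnd, Finset.sum_div]
  have hmS1 : ∀ x, margSnd q (Sum.inl x) = margFst A2 x / 2 := by
    intro x
    rw [margSnd, Fintype.sum_sum_type]
    simp only [hq3, hq2, Finset.sum_const_zero, zero_add]
    rw [margFst, Finset.sum_div]
  have hmS2 : ∀ y, margSnd q (Sum.inr y) = margSnd A1 y / 2 := by
    intro y
    rw [margSnd, Fintype.sum_sum_type]
    simp only [hq1, hq4, Finset.sum_const_zero, add_zero]
    rw [margSnd, Finset.sum_div]
  -- expand the mutual information of q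
  have hsplit : mutualInfo q
      = (∑ c, ∑ y, (A1 (c, y) / 2) *
          Real.log ((A1 (c, y) / 2) / ((margFst A1 c / 2) * (margSnd A1 y / 2))))
        + ∑ d, ∑ x, (A2 (x, d) / 2) *
          Real.log ((A2 (x, d) / 2) / ((margSnd A2 d / 2) * (margFst A2 x / 2))) := by
    rw [mutualInfo, Fintype.sum_sum_type]
    congr 1
    · refine Finset.sum_congr rfl fun c _ => ?_
      rw [Fintype.sum_sum_type]
      simp only [hq3, hq1, hmF1, hmS2, zero_mul, Finset.sum_const_zero, zero_add]
    · refine Finset.sum_congr rfl fun d _ => ?_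
      rw [Fintype.sum_sum_type]
      simp only [hq2, hq4, hmF2, hmS1, zero_mul, Finset.sum_const_zero, add_zero]
  -- apply the helper lemma to each half
  have hB1 := aux_half_mi A1 hA1nn hA1sum
  -- for the second block, use the swapped distribution
  have hB2 := aux_half_mi (fun dx : Yb × X => A2 (dx.2, dx.1)) (fun dx => hA2nn _) hA2sum
  have hmFswap : ∀ d, margFst (fun dx : Yb × X => A2 (dx.2, dx.1)) d = margSnd A2 d :=
    fun d => rfl
  have hmSswap : ∀ x, margSnd (fun dx : Yb × X => A2 (dx.2, dx.1)) x = margFst A2 x :=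
    fun x => rfl
  have hMIswap : mutualInfo (fun dx : Yb × X => A2 (dx.2, dx.1)) = mutualInfo A2 := by
    rw [mutualInfo, mutualInfo, Finset.sum_comm]
    refine Finset.sum_congr rfl fun x _ => Finset.sum_congr rfl fun d _ => ?_
    rw [hmFswap, hmSswap, mul_comm (margSnd A2 d)]
  rw [hsplit, hB1]
  have : (∑ d, ∑ x, (A2 (x, d) / 2) *
      Real.log ((A2 (x, d) / 2) / ((margSnd A2 d / 2) * (margFst A2 x / 2))))
      = (1 / 2) * mutualInfo A2 + (1 / 2) * Real.log 2 := by
    rw [← hMIswap, ← hB2]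
    refine Finset.sum_congr rfl fun d _ => Finset.sum_congr rfl fun x _ => ?_
    rw [hmFswap, hmSswap]
  rw [this]
  ring
end

section
/- L_{Ȳ}(X→X̄) ≤ L_Y(X→X̄): the relevant information loss with respect to the clustered variable Ȳ = Ψ(Y) is at most the relevant information loss with respect to Y itself, i.e., I(X;Ȳ) − I(X̄;Ȳ) ≤ I(X;Y) − I(X̄;Y). -/
open scoped BigOperators Classical

set_option linter.unusedSectionVars false

section Helpers
variable {X Y Xb Yb : Type*} [Fintype X] [Fintype Y] [Fintype Xb] [Fintype Yb]
  (p : X × Y → ℝ) (Φ : X → Xb) (Ψ : Y → Yb)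

lemma mutualInfo_eq_sum {α β : Type*} [Fintype α] [Fintype β] (p : α × β → ℝ) :
    mutualInfo p = ∑ z : α × β, p z * Real.log (p z / (margFst p z.1 * margSnd p z.2)) := by
  rw [mutualInfo, Fintype.sum_prod_type (f := fun z : α × β => p z * Real.log (p z / (margFst p z.1 * margSnd p z.2)))]

lemma sum_pushRight_mul (g : X × Yb → ℝ) :
    ∑ z : X × Yb, pushRight Ψ p z * g z = ∑ z : X × Y, p z * g (z.1, Ψ z.2) := by
  rw [Fintype.sum_prod_type, Fintype.sum_prod_type]
  refine Finset.sum_congr rfl fun x _ => ?_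
  simp only [pushRight, Finset.sum_mul, ite_mul, zero_mul]
  rw [Finset.sum_comm]
  simp [Finset.sum_ite_eq]

lemma sum_pushLeft_mul (g : Xb × Y → ℝ) :
    ∑ z : Xb × Y, pushLeft Φ p z * g z = ∑ z : X × Y, p z * g (Φ z.1, z.2) := by
  rw [Fintype.sum_prod_type, Fintype.sum_prod_type]
  conv_lhs => rw [Finset.sum_comm]
  conv_rhs => rw [Finset.sum_comm]
  refine Finset.sum_congr rfl fun y _ => ?_
  simp only [pushLeft, Finset.sum_mul, ite_mul, zero_mul]
  rw [Finset.sum_comm]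
  simp [Finset.sum_ite_eq]

lemma pushBoth_eq :
    pushBoth Φ Ψ p = pushRight Ψ (pushLeft Φ p) := by
  funext cd
  simp only [pushBoth, pushRight, pushLeft]
  rw [Finset.sum_comm]
  refine Finset.sum_congr rfl fun y _ => ?_
  by_cases h : Ψ y = cd.2 <;> simp [h]

lemma sum_pushBoth_mul (g : Xb × Yb → ℝ) :
    ∑ z : Xb × Yb, pushBoth Φ Ψ p z * g z = ∑ z : X × Y, p z * g (Φ z.1, Ψ z.2) := by
  rw [pushBoth_eq, sum_pushRight_mul (pushLeft Φ p) Ψ g,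
    sum_pushLeft_mul p Φ (fun w => g (w.1, Ψ w.2))]


lemma pushRight_nonneg_s15 (hp : ∀ x, 0 ≤ p x) : ∀ w, 0 ≤ pushRight Ψ p w := by
  intro w
  refine Finset.sum_nonneg fun b _ => ?_
  split <;> [exact hp _; exact le_rfl]

lemma pushLeft_nonneg_s15 (hp : ∀ x, 0 ≤ p x) : ∀ w, 0 ≤ pushLeft Φ p w := by
  intro w
  refine Finset.sum_nonneg fun a _ => ?_
  split <;> [exact hp _; exact le_rfl]

lemma pushBoth_nonneg_s15 (hp : ∀ x, 0 ≤ p x) : ∀ w, 0 ≤ pushBoth Φ Ψ p w := by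
  rw [pushBoth_eq]
  exact pushRight_nonneg_s15 _ _ (pushLeft_nonneg_s15 p Φ hp)

lemma le_margFst_s15 {α β : Type*} [Fintype α] [Fintype β] (p : α × β → ℝ)
    (hp : ∀ x, 0 ≤ p x) (z : α × β) : p z ≤ margFst p z.1 := by
  have := Finset.single_le_sum (f := fun b => p (z.1, b)) (fun i _ => hp _)
    (Finset.mem_univ z.2)
  simpa [margFst] using this

lemma le_margSnd_s15 {α β : Type*} [Fintype α] [Fintype β] (p : α × β → ℝ)
    (hp : ∀ x, 0 ≤ p x) (z : α × β) : p z ≤ margSnd p z.2 := by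
  have := Finset.single_le_sum (f := fun a => p (a, z.2)) (fun i _ => hp _)
    (Finset.mem_univ z.1)
  simpa [margSnd] using this

lemma le_pushRight (hp : ∀ x, 0 ≤ p x) (z : X × Y) :
    p z ≤ pushRight Ψ p (z.1, Ψ z.2) := by
  have := Finset.single_le_sum
    (f := fun b => if Ψ b = Ψ z.2 then p (z.1, b) else 0)
    (fun i _ => by split <;> [exact hp _; exact le_rfl]) (Finset.mem_univ z.2)
  simpa [pushRight] using this

lemma le_pushLeft (hp : ∀ x, 0 ≤ p x) (z : X × Y) :
    p z ≤ pushLeft Φ p (Φ z.1, z.2) := by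
  have := Finset.single_le_sum
    (f := fun a => if Φ a = Φ z.1 then p (a, z.2) else 0)
    (fun i _ => by split <;> [exact hp _; exact le_rfl]) (Finset.mem_univ z.1)
  simpa [pushLeft] using this

lemma le_pushBoth (hp : ∀ x, 0 ≤ p x) (z : X × Y) :
    p z ≤ pushBoth Φ Ψ p (Φ z.1, Ψ z.2) := by
  rw [pushBoth_eq]
  exact le_trans (le_pushLeft p Φ hp z)
    (le_pushRight (pushLeft Φ p) Ψ (pushLeft_nonneg_s15 p Φ hp) (Φ z.1, z.2))

lemma margFst_pushRight (x : X) : margFst (pushRight Ψ p) x = margFst p x := by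
  simp only [margFst, pushRight]
  rw [Finset.sum_comm]
  simp [Finset.sum_ite_eq]

lemma margSnd_pushLeft (y : Y) : margSnd (pushLeft Φ p) y = margSnd p y := by
  simp only [margSnd, pushLeft]
  rw [Finset.sum_comm]
  simp [Finset.sum_ite_eq]

lemma fiber_fst (xb : Xb) (yb : Yb) :
    ∑ x, (if Φ x = xb then pushRight Ψ p (x, yb) else 0) = pushBoth Φ Ψ p (xb, yb) := by
  simp only [pushRight, pushBoth]
  refine Finset.sum_congr rfl fun x _ => ?_
  by_cases h : Φ x = xb <;> simp [h]

lemma fiber_snd (xb : Xb) (yb : Yb) :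
    ∑ y, (if Ψ y = yb then pushLeft Φ p (xb, y) else 0) = pushBoth Φ Ψ p (xb, yb) := by
  simp only [pushLeft, pushBoth]
  conv_rhs => rw [Finset.sum_comm]
  refine Finset.sum_congr rfl fun y _ => ?_
  by_cases h : Ψ y = yb <;> simp [h]

lemma margFst_pushBoth (xb : Xb) :
    margFst (pushBoth Φ Ψ p) xb = margFst (pushLeft Φ p) xb := by
  simp only [margFst]
  have : ∀ yb, pushBoth Φ Ψ p (xb, yb) = ∑ y, (if Ψ y = yb then pushLeft Φ p (xb, y) else 0) :=
    fun yb => (fiber_snd p Φ Ψ xb yb).symm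
  simp only [this]
  rw [Finset.sum_comm]
  simp [Finset.sum_ite_eq]

lemma margSnd_pushBoth (yb : Yb) :
    margSnd (pushBoth Φ Ψ p) yb = margSnd (pushRight Ψ p) yb := by
  simp only [margSnd]
  have : ∀ xb, pushBoth Φ Ψ p (xb, yb) = ∑ x, (if Φ x = xb then pushRight Ψ p (x, yb) else 0) :=
    fun xb => (fiber_fst p Φ Ψ xb yb).symm
  simp only [this]
  rw [Finset.sum_comm]
  simp [Finset.sum_ite_eq]

lemma mass_pushBoth (h1 : ∑ x, p x = 1) : ∑ w : Xb × Yb, pushBoth Φ Ψ p w = 1 := by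
  have := sum_pushBoth_mul p Φ Ψ (fun _ => 1)
  simpa [h1] using this

end Helpers

lemma pointwise_bound (a A B q' Q r' R s' : ℝ)
    (ha : 0 ≤ a) (hq' : 0 ≤ q') (hr' : 0 ≤ r') (hs' : 0 ≤ s')
    (haA : a ≤ A) (haB : a ≤ B) (haq : a ≤ q') (har : a ≤ r') (has : a ≤ s')
    (hqQ : q' ≤ Q) (hrR : r' ≤ R) :
    a - q' * r' / s' ≤
      a * Real.log (a / (A * B)) - a * Real.log (q' / (A * Q))
        - a * Real.log (r' / (R * B)) + a * Real.log (s' / (R * Q)) := by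
  rcases eq_or_lt_of_le ha with h0 | h0
  · have hm : 0 ≤ q' * r' / s' := by positivity
    simp only [← h0, zero_mul, zero_sub, sub_zero, add_zero, neg_nonpos]
    linarith
  · have hA : 0 < A := lt_of_lt_of_le h0 haA
    have hB : 0 < B := lt_of_lt_of_le h0 haB
    have hq : 0 < q' := lt_of_lt_of_le h0 haq
    have hr : 0 < r' := lt_of_lt_of_le h0 har
    have hs : 0 < s' := lt_of_lt_of_le h0 has
    have hQ : 0 < Q := lt_of_lt_of_le hq hqQ
    have hR : 0 < R := lt_of_lt_of_le hr hrR
    have hlog : Real.log (a / (A * B)) - Real.log (q' / (A * Q))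
        - Real.log (r' / (R * B)) + Real.log (s' / (R * Q))
        = Real.log (a * s' / (q' * r')) := by
      rw [Real.log_div (ne_of_gt h0) (ne_of_gt (mul_pos hA hB)),
        Real.log_div (ne_of_gt hq) (ne_of_gt (mul_pos hA hQ)),
        Real.log_div (ne_of_gt hr) (ne_of_gt (mul_pos hR hB)),
        Real.log_div (ne_of_gt hs) (ne_of_gt (mul_pos hR hQ)),
        Real.log_div (ne_of_gt (mul_pos h0 hs)) (ne_of_gt (mul_pos hq hr)),
        Real.log_mul (ne_of_gt hA) (ne_of_gt hB),
        Real.log_mul (ne_of_gt hA) (ne_of_gt hQ),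
        Real.log_mul (ne_of_gt hR) (ne_of_gt hB),
        Real.log_mul (ne_of_gt hR) (ne_of_gt hQ),
        Real.log_mul (ne_of_gt h0) (ne_of_gt hs),
        Real.log_mul (ne_of_gt hq) (ne_of_gt hr)]
      ring
    set t : ℝ := a * s' / (q' * r') with ht_def
    have ht : 0 < t := by positivity
    have hlt : 1 - 1 / t ≤ Real.log t := by
      have h := Real.log_le_sub_one_of_pos (show (0:ℝ) < t⁻¹ by positivity)
      rw [Real.log_inv] at h
      have : (1:ℝ)/t = t⁻¹ := one_div t
      linarith
    have h2 : a * (1 - 1 / t) ≤ a * Real.log t := mul_le_mul_of_nonneg_left hlt ha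
    have h3 : a * (1 - 1 / t) = a - q' * r' / s' := by
      rw [ht_def]
      field_simp
    have h4 : a * Real.log (a / (A * B)) - a * Real.log (q' / (A * Q))
        - a * Real.log (r' / (R * B)) + a * Real.log (s' / (R * Q))
        = a * Real.log t := by
      rw [ht_def, ← hlog]; ring
    linarith

section Main
variable {X Y Xb Yb : Type*} [Fintype X] [Fintype Y] [Fintype Xb] [Fintype Yb]
  (p : X × Y → ℝ) (Φ : X → Xb) (Ψ : Y → Yb)

lemma mass_le_one (hp : ∀ x, 0 ≤ p x) (h1 : ∑ x, p x = 1) :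
    ∑ z : X × Y, pushRight Ψ p (z.1, Ψ z.2) *
      (pushLeft Φ p (Φ z.1, z.2) / pushBoth Φ Ψ p (Φ z.1, Ψ z.2)) ≤ 1 := by
  set q := pushRight Ψ p with hq
  set r := pushLeft Φ p with hr
  set s := pushBoth Φ Ψ p with hs
  have step1 : ∑ z : X × Y, q (z.1, Ψ z.2) * (r (Φ z.1, z.2) / s (Φ z.1, Ψ z.2))
      = ∑ w : Xb × Yb, ∑ z : X × Y,
        (if Φ z.1 = w.1 then q (z.1, w.2) else 0) *
          ((if Ψ z.2 = w.2 then r (w.1, z.2) else 0) / s w) := by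
    rw [Finset.sum_comm]
    refine Finset.sum_congr rfl fun z _ => ?_
    rw [Fintype.sum_prod_type]
    have : ∀ xb : Xb, ∑ yb : Yb,
        (if Φ z.1 = xb then q (z.1, yb) else 0) *
          ((if Ψ z.2 = yb then r (xb, z.2) else 0) / s (xb, yb))
        = if Φ z.1 = xb then q (z.1, Ψ z.2) * (r (xb, z.2) / s (xb, Ψ z.2)) else 0 := by
      intro xb
      by_cases h : Φ z.1 = xb
      · simp only [h, if_true]
        rw [Finset.sum_eq_single (Ψ z.2)]
        · simp
        · intro b _ hb
          simp [Ne.symm hb]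
        · simp
      · simp [h]
    simp only [this]
    simp [Finset.sum_ite_eq]
  rw [step1]
  have step2 : ∀ w : Xb × Yb, ∑ z : X × Y,
      (if Φ z.1 = w.1 then q (z.1, w.2) else 0) *
        ((if Ψ z.2 = w.2 then r (w.1, z.2) else 0) / s w) ≤ s w := by
    intro w
    rw [Fintype.sum_prod_type]
    have factored : ∑ x, ∑ y, (if Φ x = w.1 then q (x, w.2) else 0) *
        ((if Ψ y = w.2 then r (w.1, y) else 0) / s w)
        = (∑ x, if Φ x = w.1 then q (x, w.2) else 0) *
          ((∑ y, if Ψ y = w.2 then r (w.1, y) else 0) / s w) := by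
      rw [Finset.sum_div, Finset.sum_mul_sum]
    rw [factored]
    have e1 : (∑ x, if Φ x = w.1 then q (x, w.2) else 0) = s w := by
      rw [hq, hs]; simpa using fiber_fst p Φ Ψ w.1 w.2
    have e2 : (∑ y, if Ψ y = w.2 then r (w.1, y) else 0) = s w := by
      rw [hr, hs]; simpa using fiber_snd p Φ Ψ w.1 w.2
    rw [e1, e2]
    rcases eq_or_lt_of_le (pushBoth_nonneg_s15 p Φ Ψ hp w) with h0 | h0
    · rw [hs, ← h0]; simp
    · rw [div_self (ne_of_gt h0), mul_one]
  calc ∑ w : Xb × Yb, ∑ z : X × Y,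
        (if Φ z.1 = w.1 then q (z.1, w.2) else 0) *
          ((if Ψ z.2 = w.2 then r (w.1, z.2) else 0) / s w)
      ≤ ∑ w : Xb × Yb, s w := Finset.sum_le_sum fun w _ => step2 w
    _ = 1 := mass_pushBoth p Φ Ψ h1

end Main



/-- `L_{Ȳ}(X→X̄) ≤ L_Y(X→X̄)`, i.e.,
`I(X;Ȳ) − I(X̄;Ȳ) ≤ I(X;Y) − I(X̄;Y)`. -/
theorem loss_wrt_clustered_le_loss
    {X Y Xb Yb : Type*} [Fintype X] [Fintype Y] [Fintype Xb] [Fintype Yb]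
    (p : X × Y → ℝ) (hp : ∀ x, 0 ≤ p x) (h1 : ∑ x, p x = 1)
    (Φ : X → Xb) (Ψ : Y → Yb) :
    mutualInfo (pushRight Ψ p) - mutualInfo (pushBoth Φ Ψ p)
      ≤ mutualInfo p - mutualInfo (pushLeft Φ p) := by
  rw [← sub_nonneg]
  have hmq : mutualInfo (pushRight Ψ p) = ∑ z : X × Y, p z *
      Real.log (pushRight Ψ p (z.1, Ψ z.2) /
        (margFst p z.1 * margSnd (pushRight Ψ p) (Ψ z.2))) := by
    rw [mutualInfo_eq_sum, sum_pushRight_mul p Ψ (fun w =>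
      Real.log (pushRight Ψ p w / (margFst (pushRight Ψ p) w.1 * margSnd (pushRight Ψ p) w.2)))]
    simp only [margFst_pushRight]
  have hmr : mutualInfo (pushLeft Φ p) = ∑ z : X × Y, p z *
      Real.log (pushLeft Φ p (Φ z.1, z.2) /
        (margFst (pushLeft Φ p) (Φ z.1) * margSnd p z.2)) := by
    rw [mutualInfo_eq_sum, sum_pushLeft_mul p Φ (fun w =>
      Real.log (pushLeft Φ p w / (margFst (pushLeft Φ p) w.1 * margSnd (pushLeft Φ p) w.2)))]
    simp only [margSnd_pushLeft]
  have hms : mutualInfo (pushBoth Φ Ψ p) = ∑ z : X × Y, p z *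
      Real.log (pushBoth Φ Ψ p (Φ z.1, Ψ z.2) /
        (margFst (pushLeft Φ p) (Φ z.1) * margSnd (pushRight Ψ p) (Ψ z.2))) := by
    rw [mutualInfo_eq_sum, sum_pushBoth_mul p Φ Ψ (fun w =>
      Real.log (pushBoth Φ Ψ p w /
        (margFst (pushBoth Φ Ψ p) w.1 * margSnd (pushBoth Φ Ψ p) w.2)))]
    simp only [margFst_pushBoth, margSnd_pushBoth]
  rw [mutualInfo_eq_sum p, hmq, hmr, hms]
  have merge : ∀ f g h k : X × Y → ℝ,
      ((∑ z, f z) - (∑ z, g z)) - ((∑ z, h z) - (∑ z, k z))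
        = ∑ z, (f z - g z - (h z - k z)) := by
    intro f g h k
    rw [← Finset.sum_sub_distrib, ← Finset.sum_sub_distrib, ← Finset.sum_sub_distrib]
  rw [merge]
  have hpt : ∀ z : X × Y,
      p z - pushRight Ψ p (z.1, Ψ z.2) * pushLeft Φ p (Φ z.1, z.2) /
          pushBoth Φ Ψ p (Φ z.1, Ψ z.2)
        ≤ p z * Real.log (p z / (margFst p z.1 * margSnd p z.2))
          - p z * Real.log (pushLeft Φ p (Φ z.1, z.2) /
              (margFst (pushLeft Φ p) (Φ z.1) * margSnd p z.2))
          - (p z * Real.log (pushRight Ψ p (z.1, Ψ z.2) /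
              (margFst p z.1 * margSnd (pushRight Ψ p) (Ψ z.2)))
            - p z * Real.log (pushBoth Φ Ψ p (Φ z.1, Ψ z.2) /
              (margFst (pushLeft Φ p) (Φ z.1) * margSnd (pushRight Ψ p) (Ψ z.2)))) := by
    intro z
    have := pointwise_bound (p z) (margFst p z.1) (margSnd p z.2)
      (pushRight Ψ p (z.1, Ψ z.2)) (margSnd (pushRight Ψ p) (Ψ z.2))
      (pushLeft Φ p (Φ z.1, z.2)) (margFst (pushLeft Φ p) (Φ z.1))
      (pushBoth Φ Ψ p (Φ z.1, Ψ z.2))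
      (hp z) (pushRight_nonneg_s15 p Ψ hp _) (pushLeft_nonneg_s15 p Φ hp _)
      (pushBoth_nonneg_s15 p Φ Ψ hp _)
      (le_margFst_s15 p hp z) (le_margSnd_s15 p hp z)
      (le_pushRight p Ψ hp z) (le_pushLeft p Φ hp z) (le_pushBoth p Φ Ψ hp z)
      (le_margSnd_s15 (pushRight Ψ p) (pushRight_nonneg_s15 p Ψ hp) (z.1, Ψ z.2))
      (le_margFst_s15 (pushLeft Φ p) (pushLeft_nonneg_s15 p Φ hp) (Φ z.1, z.2))
    linarith
  calc (0:ℝ)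
      ≤ ∑ z : X × Y, (p z - pushRight Ψ p (z.1, Ψ z.2) * pushLeft Φ p (Φ z.1, z.2) /
          pushBoth Φ Ψ p (Φ z.1, Ψ z.2)) := by
        rw [Finset.sum_sub_distrib, h1]
        have hm := mass_le_one p Φ Ψ hp h1
        simp only [mul_div_assoc]
        linarith
    _ ≤ _ := Finset.sum_le_sum fun z _ => hpt z
end

section
/- If P_{X,Y} has a block-diagonal co-cluster structure, i.e., there exist Φ: 𝒳 → 𝒞 and Ψ: 𝒴 → 𝒞 into a common finite label set such that P_{X,Y}(x,y) = 0 whenever Φ(x) ≠ Ψ(y), then 𝓛_0(Φ,Ψ) = 0; equivalently I(X;Ψ(Y)) = I(Φ(X);Y) = I(Φ(X);Ψ(Y)). -/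
open scoped BigOperators Classical

private lemma logAux (t s : ℝ) : t * Real.log (t / (t * s)) = -(t * Real.log s) := by
  rcases eq_or_ne t 0 with h | h
  · simp [h]
  · rw [div_mul_eq_div_div, div_self h, one_div, Real.log_inv]; ring

/-- if `P_{X,Y}` has block-diagonal co-cluster structure
(`p(x,y) = 0` whenever `Φ x ≠ Ψ y`), then `𝓛₀(Φ,Ψ) = 0`; equivalently
`I(X;Ψ(Y)) = I(Φ(X);Y) = I(Φ(X);Ψ(Y))`. -/
theorem cost_zero_of_block_structure
    {X Y C : Type*} [Fintype X] [Fintype Y] [Fintype C]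
    (p : X × Y → ℝ) (hp : ∀ x, 0 ≤ p x) (h1 : ∑ x, p x = 1)
    (Φ : X → C) (Ψ : Y → C)
    (hblock : ∀ x y, Φ x ≠ Ψ y → p (x, y) = 0) :
    ((mutualInfo (pushLeft Φ p) - mutualInfo (pushBoth Φ Ψ p))
        + (mutualInfo (pushRight Ψ p) - mutualInfo (pushBoth Φ Ψ p)) = 0) ∧
      mutualInfo (pushRight Ψ p) = mutualInfo (pushBoth Φ Ψ p) ∧
      mutualInfo (pushLeft Φ p) = mutualInfo (pushBoth Φ Ψ p) := by
  classical
  set f : X → ℝ := fun x => ∑ y, p (x, y) with hf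
  set g : Y → ℝ := fun y => ∑ x, p (x, y) with hg
  set m : C → ℝ := fun c => ∑ x, if Φ x = c then f x else 0 with hm
  -- value of pushRight
  have hq : ∀ x c, pushRight Ψ p (x, c) = if Φ x = c then f x else 0 := by
    intro x c
    simp only [pushRight]
    by_cases h : Φ x = c
    · rw [if_pos h]
      simp only [hf]
      refine Finset.sum_congr rfl fun b _ => ?_
      by_cases hb : Ψ b = c
      · rw [if_pos hb]
      · rw [if_neg hb, hblock x b (fun he => hb (he ▸ h))]
    · rw [if_neg h]
      refine Finset.sum_eq_zero fun b _ => ?_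
      by_cases hb : Ψ b = c
      · rw [if_pos hb]
        exact hblock x b (fun he => h (he.trans hb))
      · rw [if_neg hb]
  -- value of pushLeft
  have hql : ∀ c y, pushLeft Φ p (c, y) = if Ψ y = c then g y else 0 := by
    intro c y
    simp only [pushLeft]
    by_cases h : Ψ y = c
    · rw [if_pos h]
      simp only [hg]
      refine Finset.sum_congr rfl fun x _ => ?_
      by_cases hx : Φ x = c
      · rw [if_pos hx]
      · rw [if_neg hx, hblock x y (fun he => hx (he.trans h))]
    · rw [if_neg h]
      refine Finset.sum_eq_zero fun x _ => ?_
      by_cases hx : Φ x = c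
      · rw [if_pos hx]
        exact hblock x y (fun he => h (he.symm.trans hx))
      · rw [if_neg hx]
  -- value of pushBoth
  have hb2 : ∀ c d, pushBoth Φ Ψ p (c, d) = if c = d then m c else 0 := by
    intro c d
    simp only [pushBoth]
    have hx : ∀ x : X, (∑ y, if Φ x = c ∧ Ψ y = d then p (x, y) else 0)
        = if Φ x = c then (if Φ x = d then f x else 0) else 0 := by
      intro x
      by_cases h : Φ x = c
      · rw [if_pos h]
        have hqx := hq x d
        simp only [pushRight] at hqx
        rw [← hqx]
        refine Finset.sum_congr rfl fun y _ => ?_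
        by_cases hy : Ψ y = d
        · rw [if_pos ⟨h, hy⟩, if_pos hy]
        · rw [if_neg (fun hh => hy hh.2), if_neg hy]
      · rw [if_neg h]
        exact Finset.sum_eq_zero fun y _ => if_neg (fun hh => h hh.1)
    rw [Finset.sum_congr rfl fun x _ => hx x]
    by_cases hcd : c = d
    · subst hcd
      rw [if_pos rfl]
      simp only [hm]
      refine Finset.sum_congr rfl fun x _ => ?_
      by_cases h : Φ x = c <;> simp [h]
    · rw [if_neg hcd]
      refine Finset.sum_eq_zero fun x _ => ?_
      by_cases h : Φ x = c
      · rw [if_pos h, if_neg (fun hd => hcd (h.symm.trans hd))]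
      · rw [if_neg h]
  -- fibers of Ψ also carry mass m
  have hm' : ∀ c, (∑ y, if Ψ y = c then g y else 0) = m c := by
    intro c
    have hL : (∑ y, if Ψ y = c then g y else 0)
        = ∑ y, ∑ x, if Φ x = c ∧ Ψ y = c then p (x, y) else 0 := by
      refine Finset.sum_congr rfl fun y _ => ?_
      by_cases hy : Ψ y = c
      · rw [if_pos hy]
        simp only [hg]
        refine Finset.sum_congr rfl fun x _ => ?_
        by_cases hx : Φ x = c
        · rw [if_pos ⟨hx, hy⟩]
        · rw [if_neg (fun hh => hx hh.1), hblock x y (fun he => hx (he.trans hy))]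
      · rw [if_neg hy]
        exact (Finset.sum_eq_zero fun x _ => if_neg (fun hh => hy hh.2)).symm
    have hR : m c = ∑ x, ∑ y, if Φ x = c ∧ Ψ y = c then p (x, y) else 0 := by
      simp only [hm, hf]
      refine Finset.sum_congr rfl fun x _ => ?_
      by_cases hx : Φ x = c
      · rw [if_pos hx]
        refine Finset.sum_congr rfl fun y _ => ?_
        by_cases hy : Ψ y = c
        · rw [if_pos ⟨hx, hy⟩]
        · rw [if_neg (fun hh => hy hh.2), hblock x y (fun he => hy (he.symm.trans hx))]
      · rw [if_neg hx]
        exact (Finset.sum_eq_zero fun y _ => if_neg (fun hh => hx hh.1)).symm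
    rw [hL, Finset.sum_comm, ← hR]
  -- marginals
  have hmf1 : ∀ x, margFst (pushRight Ψ p) x = f x := by
    intro x
    simp only [margFst]
    rw [Finset.sum_congr rfl fun c _ => hq x c]
    simp only [Finset.sum_ite_eq, Finset.mem_univ, if_true]
  have hms1 : ∀ c, margSnd (pushRight Ψ p) c = m c := by
    intro c
    simp only [margSnd, hm]
    exact Finset.sum_congr rfl fun x _ => hq x c
  have hmf2 : ∀ c, margFst (pushBoth Φ Ψ p) c = m c := by
    intro c
    simp only [margFst]
    rw [Finset.sum_congr rfl fun d _ => hb2 c d]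
    simp only [Finset.sum_ite_eq, Finset.mem_univ, if_true]
  have hms2 : ∀ d, margSnd (pushBoth Φ Ψ p) d = m d := by
    intro d
    simp only [margSnd]
    rw [Finset.sum_congr rfl fun c _ => hb2 c d]
    simp only [Finset.sum_ite_eq', Finset.mem_univ, if_true]
  have hmfL : ∀ c, margFst (pushLeft Φ p) c = m c := by
    intro c
    simp only [margFst]
    rw [Finset.sum_congr rfl fun y _ => hql c y, hm' c]
  have hmsL : ∀ y, margSnd (pushLeft Φ p) y = g y := by
    intro y
    simp only [margSnd]
    rw [Finset.sum_congr rfl fun c _ => hql c y]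
    simp only [Finset.sum_ite_eq, Finset.mem_univ, if_true]
  -- mutual informations
  have hMIb : mutualInfo (pushBoth Φ Ψ p) = ∑ c, -(m c * Real.log (m c)) := by
    unfold mutualInfo
    refine Finset.sum_congr rfl fun c _ => ?_
    have step : ∀ d : C, pushBoth Φ Ψ p (c, d) * Real.log (pushBoth Φ Ψ p (c, d)
        / (margFst (pushBoth Φ Ψ p) c * margSnd (pushBoth Φ Ψ p) d))
        = if c = d then m c * Real.log (m c / (m c * m d)) else 0 := by
      intro d
      rw [hb2, hmf2, hms2]
      by_cases h : c = d
      · rw [if_pos h, if_pos h]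
      · rw [if_neg h, if_neg h, zero_mul]
    rw [Finset.sum_congr rfl fun d _ => step d]
    simp only [Finset.sum_ite_eq, Finset.mem_univ, if_true]
    exact logAux (m c) (m c)
  have hMIr : mutualInfo (pushRight Ψ p) = ∑ x, -(f x * Real.log (m (Φ x))) := by
    unfold mutualInfo
    refine Finset.sum_congr rfl fun x _ => ?_
    have step : ∀ c : C, pushRight Ψ p (x, c) * Real.log (pushRight Ψ p (x, c)
        / (margFst (pushRight Ψ p) x * margSnd (pushRight Ψ p) c))
        = if Φ x = c then f x * Real.log (f x / (f x * m c)) else 0 := by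
      intro c
      rw [hq, hmf1, hms1]
      by_cases h : Φ x = c
      · rw [if_pos h, if_pos h]
      · rw [if_neg h, if_neg h, zero_mul]
    rw [Finset.sum_congr rfl fun c _ => step c]
    simp only [Finset.sum_ite_eq, Finset.mem_univ, if_true]
    exact logAux (f x) (m (Φ x))
  have hMIl : mutualInfo (pushLeft Φ p) = ∑ y, -(g y * Real.log (m (Ψ y))) := by
    unfold mutualInfo
    have step : ∀ (c : C) (y : Y), pushLeft Φ p (c, y) * Real.log (pushLeft Φ p (c, y)
        / (margFst (pushLeft Φ p) c * margSnd (pushLeft Φ p) y))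
        = if Ψ y = c then g y * Real.log (g y / (g y * m c)) else 0 := by
      intro c y
      rw [hql, hmfL, hmsL, mul_comm (m c) (g y)]
      by_cases h : Ψ y = c
      · rw [if_pos h, if_pos h]
      · rw [if_neg h, if_neg h, zero_mul]
    rw [Finset.sum_congr rfl fun c _ => Finset.sum_congr rfl fun y _ => step c y,
      Finset.sum_comm]
    refine Finset.sum_congr rfl fun y _ => ?_
    simp only [Finset.sum_ite_eq, Finset.mem_univ, if_true]
    exact logAux (g y) (m (Ψ y))
  -- collapsing fiber sums
  have hcollapse : ∀ (c : C) (r : ℝ), (∑ x, if Φ x = c then f x * r else 0) = m c * r := by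
    intro c r
    simp only [hm]
    rw [Finset.sum_mul]
    refine Finset.sum_congr rfl fun x _ => ?_
    by_cases h : Φ x = c <;> simp [h]
  have hcollapse2 : ∀ (c : C) (r : ℝ), (∑ y, if Ψ y = c then g y * r else 0) = m c * r := by
    intro c r
    rw [← hm' c, Finset.sum_mul]
    refine Finset.sum_congr rfl fun y _ => ?_
    by_cases h : Ψ y = c <;> simp [h]
  have hkey : ∑ x, f x * Real.log (m (Φ x)) = ∑ c, m c * Real.log (m c) := by
    have expand : ∀ x, f x * Real.log (m (Φ x))
        = ∑ c, if Φ x = c then f x * Real.log (m c) else 0 := by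
      intro x
      simp only [Finset.sum_ite_eq, Finset.mem_univ, if_true]
    rw [Finset.sum_congr rfl fun x _ => expand x, Finset.sum_comm]
    exact Finset.sum_congr rfl fun c _ => hcollapse c _
  have hkey2 : ∑ y, g y * Real.log (m (Ψ y)) = ∑ c, m c * Real.log (m c) := by
    have expand : ∀ y, g y * Real.log (m (Ψ y))
        = ∑ c, if Ψ y = c then g y * Real.log (m c) else 0 := by
      intro y
      simp only [Finset.sum_ite_eq, Finset.mem_univ, if_true]
    rw [Finset.sum_congr rfl fun y _ => expand y, Finset.sum_comm]
    exact Finset.sum_congr rfl fun c _ => hcollapse2 c _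
  have e1 : mutualInfo (pushRight Ψ p) = mutualInfo (pushBoth Φ Ψ p) := by
    rw [hMIr, hMIb, Finset.sum_neg_distrib, Finset.sum_neg_distrib, hkey]
  have e2 : mutualInfo (pushLeft Φ p) = mutualInfo (pushBoth Φ Ψ p) := by
    rw [hMIl, hMIb, Finset.sum_neg_distrib, Finset.sum_neg_distrib, hkey2]
  refine ⟨?_, e1, e2⟩
  rw [e1, e2]
  ring
end
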